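/- arXiv:2312.14810 — 3 statements merged into one kernel-verified Lean document; each statement's English description precedes it below -/
import Mathlib

section
/- Suppose there exist symmetric matrices H, Ĥ ∈ ℝ^{n×n} and matrices δ, δ̂ ∈ ℝ^{n×n} such that the stationarity conditions ∇L(η*) = 0 and ∇L̂(η̂*) = 0 hold, P η̂* = η̂*, the Taylor-type identities ∇L(η̂*) = H(η̂* − η*) + δ(η̂* − η*) and ∇L̂(η*) = Ĥ(η* − η̂*) + δ̂(η* − η̂*) hold, and the lower bound ‖(Ĥ + H)(η* − η̂*) + (δ̂ + δ)(η* − η̂*)‖ ≥ c_h ‖η* − η̂*‖ holds for some constant c_h > 0. Suppose moreover that ‖F(η) − F̂(η)‖ ≤ ε₁ and ‖∇F(η) − ∇F̂(η)‖_F ≤ ε₂ for η = η* and η = η̂*, and that ‖(I − P)η*‖ ≤ ε₃. Then ‖η* − η̂*‖ ≤ (c̄₁ ε₁ + c̄₂ ε₂ + ε₃)/c_h, where c̄₁ = ‖Γ⁻¹‖_op (‖∇F̂(η*)‖_F + ‖∇F(η̂*)‖_F) and c̄₂ = ‖Γ⁻¹‖_op (2‖y‖ + ‖F(η*)‖ +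 ‖F̂(η̂*)‖). -/
open Matrix

/-- Euclidean norm of a vector in `ℝ^k`. -/
noncomputable def vnorm {k : ℕ} (x : Fin k → ℝ) : ℝ := Real.sqrt (∑ i, x i ^ 2)

/-- Frobenius norm of a matrix. -/
noncomputable def fnorm {k l : ℕ} (A : Matrix (Fin k) (Fin l) ℝ) : ℝ :=
  Real.sqrt (∑ i, ∑ j, A i j ^ 2)

/-- Operator (spectral) norm of a square matrix. -/
noncomputable def opnorm {k : ℕ} (A : Matrix (Fin k) (Fin k) ℝ) : ℝ :=
  ‖Matrix.toEuclideanCLM (𝕜 := ℝ) A‖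

/-- Gradient of the high-fidelity objective
`L(η) = ½ (y - F(η))ᵀ Γ⁻¹ (y - F(η)) + ½ ‖η‖²`, expressed via the Jacobian `J` of `F`:
`∇L(η) = -(∇F(η))ᵀ Γ⁻¹ (y - F(η)) + η`. -/
noncomputable def gradL {n m : ℕ} (y : Fin m → ℝ) (Γ : Matrix (Fin m) (Fin m) ℝ)
    (F : (Fin n → ℝ) → Fin m → ℝ) (J : (Fin n → ℝ) → Matrix (Fin m) (Fin n) ℝ)
    (η : Fin n → ℝ) : Fin n → ℝ :=
  -((J η)ᵀ *ᵥ (Γ⁻¹ *ᵥ (y - F η))) + η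

/-- Gradient of the surrogate objective
`L̂(η) = ½ (y - F̂(η))ᵀ Γ⁻¹ (y - F̂(η)) + ½ ‖Φᵀ η‖²` (with `ΦᵀΦ = I`, `P = ΦΦᵀ`):
`∇L̂(η) = -(∇F̂(η))ᵀ Γ⁻¹ (y - F̂(η)) + P η`. -/
noncomputable def gradLhat {n m r : ℕ} (y : Fin m → ℝ) (Γ : Matrix (Fin m) (Fin m) ℝ)
    (Fh : (Fin n → ℝ) → Fin m → ℝ) (Jh : (Fin n → ℝ) → Matrix (Fin m) (Fin n) ℝ)
    (Φ : Matrix (Fin n) (Fin r) ℝ) (η : Fin n → ℝ) : Fin n → ℝ :=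
  -((Jh η)ᵀ *ᵥ (Γ⁻¹ *ᵥ (y - Fh η))) + (Φ * Φᵀ) *ᵥ η

lemma vnorm_eq {k : ℕ} (x : Fin k → ℝ) :
    vnorm x = ‖(WithLp.equiv 2 (Fin k → ℝ)).symm x‖ := by
  rw [EuclideanSpace.norm_eq]
  simp [vnorm, Real.norm_eq_abs, sq_abs]

lemma vnorm_nonneg {k : ℕ} (x : Fin k → ℝ) : 0 ≤ vnorm x := Real.sqrt_nonneg _
lemma fnorm_nonneg {k l : ℕ} (A : Matrix (Fin k) (Fin l) ℝ) : 0 ≤ fnorm A := Real.sqrt_nonneg _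
lemma opnorm_nonneg {k : ℕ} (A : Matrix (Fin k) (Fin k) ℝ) : 0 ≤ opnorm A := norm_nonneg _

lemma vnorm_add_le {k : ℕ} (x z : Fin k → ℝ) : vnorm (x + z) ≤ vnorm x + vnorm z := by
  simp only [vnorm_eq]
  rw [show (WithLp.equiv 2 (Fin k → ℝ)).symm (x + z)
      = (WithLp.equiv 2 (Fin k → ℝ)).symm x + (WithLp.equiv 2 (Fin k → ℝ)).symm z from rfl]
  exact norm_add_le _ _

lemma vnorm_neg {k : ℕ} (x : Fin k → ℝ) : vnorm (-x) = vnorm x := by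
  simp [vnorm]

lemma vnorm_sub_le {k : ℕ} (x z : Fin k → ℝ) : vnorm (x - z) ≤ vnorm x + vnorm z := by
  rw [sub_eq_add_neg]
  exact (vnorm_add_le x (-z)).trans (by rw [vnorm_neg])

lemma vnorm_mulVec_le_opnorm {k : ℕ} (A : Matrix (Fin k) (Fin k) ℝ) (x : Fin k → ℝ) :
    vnorm (A *ᵥ x) ≤ opnorm A * vnorm x := by
  simp only [vnorm_eq]
  rw [← Matrix.toLin'_apply, show (WithLp.equiv 2 (Fin k → ℝ)).symm (Matrix.toLin' A x) = Matrix.toEuclideanCLM (𝕜 := ℝ) A ((WithLp.equiv 2 (Fin k → ℝ)).symm x) from rfl]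
  exact (Matrix.toEuclideanCLM (𝕜 := ℝ) A).le_opNorm _

lemma fnorm_transpose {k l : ℕ} (A : Matrix (Fin k) (Fin l) ℝ) : fnorm Aᵀ = fnorm A := by
  unfold fnorm
  rw [Finset.sum_comm]
  rfl

lemma vnorm_mulVec_le_fnorm {k l : ℕ} (A : Matrix (Fin k) (Fin l) ℝ) (x : Fin l → ℝ) :
    vnorm (A *ᵥ x) ≤ fnorm A * vnorm x := by
  unfold vnorm fnorm
  rw [← Real.sqrt_mul (by positivity)]
  apply Real.sqrt_le_sqrt
  rw [Finset.sum_mul]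
  apply Finset.sum_le_sum
  intro i _
  calc (A *ᵥ x) i ^ 2 = (∑ j, A i j * x j) ^ 2 := by rfl
    _ ≤ (∑ j, A i j ^ 2) * (∑ j, x j ^ 2) :=
        Finset.sum_mul_sq_le_sq_mul_sq _ _ _

/-- **Error bound for the MAP point** (Theorem 1 of the paper).
Under stationarity of the exact and surrogate MAP points, exact Taylor-type expansions of the
gradients with symmetric Hessians `H, Ĥ` and remainders `δ, δ̂`, a coercivity lower bound with
constant `c_h > 0`, accuracy `ε₁, ε₂` of the surrogate forward map and its Jacobian at the two
MAP points, and projection error `ε₃`, the MAP points satisfy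
`‖η* - η̂*‖ ≤ (c̄₁ ε₁ + c̄₂ ε₂ + ε₃)/c_h`. -/
theorem map_point_error
    {n m r : ℕ} (hn : 0 < n) (hm : 0 < m) (hr : 0 < r)
    (y : Fin m → ℝ) (Γ : Matrix (Fin m) (Fin m) ℝ) (hΓ : Γ.PosDef)
    (F Fh : (Fin n → ℝ) → Fin m → ℝ)
    (J Jh : (Fin n → ℝ) → Matrix (Fin m) (Fin n) ℝ)
    (Φ : Matrix (Fin n) (Fin r) ℝ) (hΦ : Φᵀ * Φ = 1)
    (ηs ηh : Fin n → ℝ)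
    (H Hh δ δh : Matrix (Fin n) (Fin n) ℝ)
    (hHsymm : H.IsSymm) (hHhsymm : Hh.IsSymm)
    (hstat : gradL y Γ F J ηs = 0)
    (hstath : gradLhat y Γ Fh Jh Φ ηh = 0)
    (hproj : (Φ * Φᵀ) *ᵥ ηh = ηh)
    (hTaylor : gradL y Γ F J ηh = H *ᵥ (ηh - ηs) + δ *ᵥ (ηh - ηs))
    (hTaylorh : gradLhat y Γ Fh Jh Φ ηs = Hh *ᵥ (ηs - ηh) + δh *ᵥ (ηs - ηh))
    (ch : ℝ) (hch : 0 < ch)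
    (hlow : ch * vnorm (ηs - ηh) ≤
      vnorm ((Hh + H) *ᵥ (ηs - ηh) + (δh + δ) *ᵥ (ηs - ηh)))
    (ε₁ ε₂ ε₃ : ℝ)
    (hF1 : vnorm (F ηs - Fh ηs) ≤ ε₁) (hF2 : vnorm (F ηh - Fh ηh) ≤ ε₁)
    (hJ1 : fnorm (J ηs - Jh ηs) ≤ ε₂) (hJ2 : fnorm (J ηh - Jh ηh) ≤ ε₂)
    (hP : vnorm ((1 - Φ * Φᵀ) *ᵥ ηs) ≤ ε₃) :
    vnorm (ηs - ηh) ≤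
      (opnorm Γ⁻¹ * (fnorm (Jh ηs) + fnorm (J ηh)) * ε₁ +
        opnorm Γ⁻¹ * (2 * vnorm y + vnorm (F ηs) + vnorm (Fh ηh)) * ε₂ + ε₃) / ch := by
  set g := opnorm Γ⁻¹ with hgdef
  have hg : 0 ≤ g := opnorm_nonneg _
  have hε₁ : 0 ≤ ε₁ := le_trans (vnorm_nonneg _) hF1
  have hε₂ : 0 ≤ ε₂ := le_trans (fnorm_nonneg _) hJ1
  set T1 := (J ηs - Jh ηs)ᵀ *ᵥ (Γ⁻¹ *ᵥ (y - F ηs)) with hT1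
  set T2 := (Jh ηs)ᵀ *ᵥ (Γ⁻¹ *ᵥ (Fh ηs - F ηs)) with hT2
  set T3 := (J ηh - Jh ηh)ᵀ *ᵥ (Γ⁻¹ *ᵥ (y - Fh ηh)) with hT3
  set T4 := (J ηh)ᵀ *ᵥ (Γ⁻¹ *ᵥ (Fh ηh - F ηh)) with hT4
  set T5 := (1 - Φ * Φᵀ) *ᵥ ηs with hT5
  have key : (Hh + H) *ᵥ (ηs - ηh) + (δh + δ) *ᵥ (ηs - ηh) = T1 + T2 + T3 + T4 - T5 := by
    have lhs_eq : (Hh + H) *ᵥ (ηs - ηh) + (δh + δ) *ᵥ (ηs - ηh)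
        = gradLhat y Γ Fh Jh Φ ηs - gradL y Γ F J ηh := by
      rw [hTaylorh, hTaylor, show ηh - ηs = -(ηs - ηh) from (neg_sub _ _).symm]
      simp only [Matrix.add_mulVec, Matrix.mulVec_neg]
      abel
    rw [lhs_eq, show gradLhat y Γ Fh Jh Φ ηs - gradL y Γ F J ηh
        = gradLhat y Γ Fh Jh Φ ηs + gradLhat y Γ Fh Jh Φ ηh
          - (gradL y Γ F J ηh + gradL y Γ F J ηs) from by rw [hstat, hstath]; abel]
    simp only [hT1, hT2, hT3, hT4, hT5, gradL, gradLhat, hproj, Matrix.transpose_sub,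
      Matrix.sub_mulVec, Matrix.mulVec_sub, Matrix.one_mulVec]
    abel
  have bT : ∀ (B : Matrix (Fin m) (Fin n) ℝ) (v : Fin m → ℝ),
      vnorm (Bᵀ *ᵥ (Γ⁻¹ *ᵥ v)) ≤ fnorm B * (g * vnorm v) := by
    intro B v
    calc vnorm (Bᵀ *ᵥ (Γ⁻¹ *ᵥ v)) ≤ fnorm Bᵀ * vnorm (Γ⁻¹ *ᵥ v) :=
          vnorm_mulVec_le_fnorm _ _
      _ ≤ fnorm B * (g * vnorm v) := by
          rw [fnorm_transpose]
          exact mul_le_mul_of_nonneg_left (vnorm_mulVec_le_opnorm _ _) (fnorm_nonneg _)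
  have b1 : vnorm T1 ≤ ε₂ * (g * (vnorm y + vnorm (F ηs))) := by
    refine (bT _ _).trans (mul_le_mul hJ1 ?_ (mul_nonneg hg (vnorm_nonneg _)) hε₂)
    exact mul_le_mul_of_nonneg_left (vnorm_sub_le _ _) hg
  have b3 : vnorm T3 ≤ ε₂ * (g * (vnorm y + vnorm (Fh ηh))) := by
    refine (bT _ _).trans (mul_le_mul hJ2 ?_ (mul_nonneg hg (vnorm_nonneg _)) hε₂)
    exact mul_le_mul_of_nonneg_left (vnorm_sub_le _ _) hg
  have b2 : vnorm T2 ≤ fnorm (Jh ηs) * (g * ε₁) := by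
    refine (bT _ _).trans (mul_le_mul_of_nonneg_left ?_ (fnorm_nonneg _))
    refine mul_le_mul_of_nonneg_left ?_ hg
    rw [show Fh ηs - F ηs = -(F ηs - Fh ηs) from (neg_sub _ _).symm, vnorm_neg]
    exact hF1
  have b4 : vnorm T4 ≤ fnorm (J ηh) * (g * ε₁) := by
    refine (bT _ _).trans (mul_le_mul_of_nonneg_left ?_ (fnorm_nonneg _))
    refine mul_le_mul_of_nonneg_left ?_ hg
    rw [show Fh ηh - F ηh = -(F ηh - Fh ηh) from (neg_sub _ _).symm, vnorm_neg]
    exact hF2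
  have tri : vnorm (T1 + T2 + T3 + T4 - T5)
      ≤ vnorm T1 + vnorm T2 + vnorm T3 + vnorm T4 + vnorm T5 := by
    calc vnorm (T1 + T2 + T3 + T4 - T5)
        ≤ vnorm (T1 + T2 + T3 + T4) + vnorm T5 := vnorm_sub_le _ _
      _ ≤ vnorm (T1 + T2 + T3) + vnorm T4 + vnorm T5 := by
          gcongr; exact vnorm_add_le _ _
      _ ≤ vnorm (T1 + T2) + vnorm T3 + vnorm T4 + vnorm T5 := by
          gcongr; exact vnorm_add_le _ _
      _ ≤ vnorm T1 + vnorm T2 + vnorm T3 + vnorm T4 + vnorm T5 := by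
          gcongr; exact vnorm_add_le _ _
  have main : ch * vnorm (ηs - ηh) ≤
      g * (fnorm (Jh ηs) + fnorm (J ηh)) * ε₁ +
        g * (2 * vnorm y + vnorm (F ηs) + vnorm (Fh ηh)) * ε₂ + ε₃ := by
    refine hlow.trans ?_
    rw [key]
    refine tri.trans ?_
    have heq : g * (fnorm (Jh ηs) + fnorm (J ηh)) * ε₁ +
        g * (2 * vnorm y + vnorm (F ηs) + vnorm (Fh ηh)) * ε₂ + ε₃
        = ε₂ * (g * (vnorm y + vnorm (F ηs))) + fnorm (Jh ηs) * (g * ε₁)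
          + ε₂ * (g * (vnorm y + vnorm (Fh ηh))) + fnorm (J ηh) * (g * ε₁) + ε₃ := by ring
    rw [heq]
    linarith [b1, b2, b3, b4, hP]
  rw [le_div_iff₀ hch]
  linarith [main]
end

section
/- Let r be a positive integer, ε_λ ≥ 0 and ε_m ≥ 0, let λ₁, …, λ_r and λ̂₁, …, λ̂_r be positive real numbers with |λ_i − λ̂_i| ≤ ε_λ for every i, and let m*, m̂*, m_p ∈ ℝ^n satisfy ‖m* − m̂*‖_{Γ⁻¹} ≤ ε_m. Define the information gain E = Σ_{i=1}^r log(1 + λ_i) − Σ_{i=1}^r λ_i/(1 + λ_i) + ‖m* − m_p‖²_{Γ⁻¹} and its approximation Ê = Σ_{i=1}^r log(1 + λ̂_i) − Σ_{i=1}^r λ̂_i/(1 + λ̂_i) + ‖m̂* − m_p‖²_{Γ⁻¹}. Then |E − Ê| ≤ 2 r ε_λ + c_m ε_m, where c_m = ‖m* − m_p‖_{Γ⁻¹} + ‖m̂* − m_p‖_{Γ⁻¹}. -/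
open Matrix

/-- The `Γ⁻¹`-weighted norm `‖x‖_{Γ⁻¹} = √(xᵀ Γ⁻¹ x)` on `ℝ^n`. -/
noncomputable def gnorm {n : ℕ} (Γ : Matrix (Fin n) (Fin n) ℝ) (x : Fin n → ℝ) : ℝ :=
  Real.sqrt (x ⬝ᵥ (Γ⁻¹ *ᵥ x))

lemma log_one_add_lip {a b : ℝ} (ha : 0 < a) (hb : 0 < b) :
    |Real.log (1 + a) - Real.log (1 + b)| ≤ |a - b| := by
  wlog h : b ≤ a generalizing a b
  · rw [abs_sub_comm, abs_sub_comm a b]; exact this hb ha (le_of_not_ge h)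
  have h1b : (0:ℝ) < 1 + b := by linarith
  have h1a : (0:ℝ) < 1 + a := by linarith
  have hle : Real.log (1 + a) - Real.log (1 + b) ≤ a - b := by
    rw [← Real.log_div (by positivity) (by positivity)]
    have := Real.log_le_sub_one_of_pos (x := (1+a)/(1+b)) (by positivity)
    have h2 : (1+a)/(1+b) - 1 = (a - b)/(1+b) := by
      field_simp
      ring
    have h3 : (a - b)/(1+b) ≤ a - b := by
      rw [div_le_iff₀ h1b]; nlinarith
    linarith
  have hge : 0 ≤ Real.log (1 + a) - Real.log (1 + b) := by
    have := Real.log_le_log h1b (by linarith : 1 + b ≤ 1 + a); linarith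
  rw [abs_of_nonneg hge, abs_of_nonneg (by linarith : (0:ℝ) ≤ a - b)]
  exact hle

lemma ratio_lip {a b : ℝ} (ha : 0 < a) (hb : 0 < b) :
    |a / (1 + a) - b / (1 + b)| ≤ |a - b| := by
  have h1a : (0:ℝ) < 1 + a := by linarith
  have h1b : (0:ℝ) < 1 + b := by linarith
  have key : a / (1 + a) - b / (1 + b) = (a - b) / ((1 + a) * (1 + b)) := by
    field_simp; ring
  rw [key, abs_div]
  have hd : (1:ℝ) ≤ |(1 + a) * (1 + b)| := by
    rw [abs_of_pos (by positivity)]; nlinarith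
  calc |a - b| / |(1 + a) * (1 + b)| ≤ |a - b| / 1 :=
        div_le_div_of_nonneg_left (abs_nonneg _) one_pos hd
    _ = |a - b| := div_one _

lemma gnorm_eq_norm {n : ℕ} {Γ : Matrix (Fin n) (Fin n) ℝ} (hΓ : Γ.PosDef) (x : Fin n → ℝ) :
    gnorm Γ x = @norm _ (@SeminormedAddGroup.toNorm _
      (@SeminormedAddCommGroup.toSeminormedAddGroup _
        (@NormedAddCommGroup.toSeminormedAddCommGroup _
          (Matrix.toNormedAddCommGroup _ hΓ.inv)))) x := by
  rw [gnorm, dotProduct_comm]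
  rfl

lemma gnorm_nonneg {n : ℕ} (Γ : Matrix (Fin n) (Fin n) ℝ) (x : Fin n → ℝ) :
    0 ≤ gnorm Γ x := Real.sqrt_nonneg _

lemma gnorm_sub_le {n : ℕ} {Γ : Matrix (Fin n) (Fin n) ℝ} (hΓ : Γ.PosDef)
    (a b : Fin n → ℝ) : |gnorm Γ a - gnorm Γ b| ≤ gnorm Γ (a - b) := by
  have h := @abs_norm_sub_norm_le (Fin n → ℝ)
      (@NormedAddCommGroup.toSeminormedAddCommGroup _
        (Matrix.toNormedAddCommGroup _ hΓ.inv)) a b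
  rw [gnorm_eq_norm hΓ, gnorm_eq_norm hΓ, gnorm_eq_norm hΓ]
  exact h

/-- **Approximation error of the EIG-optimality criterion.**
With positive eigenvalues `λᵢ, λ̂ᵢ` satisfying `|λᵢ - λ̂ᵢ| ≤ ε_λ`, and MAP points `m*, m̂*`
satisfying `‖m* - m̂*‖_{Γ⁻¹} ≤ ε_m`, the information gain
`E = Σ log(1+λᵢ) - Σ λᵢ/(1+λᵢ) + ‖m* - m_p‖²_{Γ⁻¹}` and its approximation `Ê` satisfy
`|E - Ê| ≤ 2 r ε_λ + c_m ε_m`, with `c_m = ‖m* - m_p‖_{Γ⁻¹} + ‖m̂* - m_p‖_{Γ⁻¹}`. -/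
theorem eig_optimality_error
    (r : ℕ) (hr : 0 < r) {n : ℕ}
    (Γ : Matrix (Fin n) (Fin n) ℝ) (hΓ : Γ.PosDef)
    (lam lamh : Fin r → ℝ)
    (hpos : ∀ i, 0 < lam i) (hposh : ∀ i, 0 < lamh i)
    (εlam εm : ℝ) (hεlam : 0 ≤ εlam) (hεm : 0 ≤ εm)
    (hclose : ∀ i, |lam i - lamh i| ≤ εlam)
    (ms mh mp : Fin n → ℝ)
    (hmap : gnorm Γ (ms - mh) ≤ εm) :
    |((∑ i, Real.log (1 + lam i)) - (∑ i, lam i / (1 + lam i)) + gnorm Γ (ms - mp) ^ 2) -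
        ((∑ i, Real.log (1 + lamh i)) - (∑ i, lamh i / (1 + lamh i)) +
          gnorm Γ (mh - mp) ^ 2)| ≤
      2 * r * εlam + (gnorm Γ (ms - mp) + gnorm Γ (mh - mp)) * εm := by
  set A := gnorm Γ (ms - mp) with hA
  set B := gnorm Γ (mh - mp) with hB
  have hA0 : 0 ≤ A := gnorm_nonneg _ _
  have hB0 : 0 ≤ B := gnorm_nonneg _ _
  have hlog : |(∑ i, Real.log (1 + lam i)) - ∑ i, Real.log (1 + lamh i)| ≤ r * εlam := by
    rw [← Finset.sum_sub_distrib]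
    calc |∑ i, (Real.log (1 + lam i) - Real.log (1 + lamh i))|
        ≤ ∑ i, |Real.log (1 + lam i) - Real.log (1 + lamh i)| :=
          Finset.abs_sum_le_sum_abs _ _
      _ ≤ ∑ _i : Fin r, εlam := Finset.sum_le_sum fun i _ =>
          (log_one_add_lip (hpos i) (hposh i)).trans (hclose i)
      _ = r * εlam := by simp [mul_comm]
  have hrat : |(∑ i, lam i / (1 + lam i)) - ∑ i, lamh i / (1 + lamh i)| ≤ r * εlam := by
    rw [← Finset.sum_sub_distrib]
    calc |∑ i, (lam i / (1 + lam i) - lamh i / (1 + lamh i))|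
        ≤ ∑ i, |lam i / (1 + lam i) - lamh i / (1 + lamh i)| :=
          Finset.abs_sum_le_sum_abs _ _
      _ ≤ ∑ _i : Fin r, εlam := Finset.sum_le_sum fun i _ =>
          (ratio_lip (hpos i) (hposh i)).trans (hclose i)
      _ = r * εlam := by simp [mul_comm]
  have hsq : |A ^ 2 - B ^ 2| ≤ (A + B) * εm := by
    have h1 : |A - B| ≤ εm := by
      have := gnorm_sub_le hΓ (ms - mp) (mh - mp)
      have heq : (ms - mp) - (mh - mp) = ms - mh := by abel
      rw [heq] at this
      exact this.trans hmap
    have : |A ^ 2 - B ^ 2| = |A + B| * |A - B| := by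
      rw [← abs_mul]; ring_nf
    rw [this, abs_of_nonneg (by linarith)]
    exact mul_le_mul_of_nonneg_left h1 (by linarith)
  set u := (∑ i, Real.log (1 + lam i)) - ∑ i, Real.log (1 + lamh i) with hu
  set v := (∑ i, lam i / (1 + lam i)) - ∑ i, lamh i / (1 + lamh i) with hv
  have hdecomp : ((∑ i, Real.log (1 + lam i)) - (∑ i, lam i / (1 + lam i)) + A ^ 2) -
      ((∑ i, Real.log (1 + lamh i)) - (∑ i, lamh i / (1 + lamh i)) + B ^ 2)
      = u - v + (A ^ 2 - B ^ 2) := by rw [hu, hv]; ring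
  rw [hdecomp]
  calc |u - v + (A ^ 2 - B ^ 2)| ≤ |u - v| + |A ^ 2 - B ^ 2| := abs_add_le _ _
    _ ≤ |u| + |v| + |A ^ 2 - B ^ 2| := by linarith [abs_sub u v]
    _ ≤ r * εlam + r * εlam + (A + B) * εm := by gcongr
    _ = 2 * r * εlam + (A + B) * εm := by ring
end

section
/- Suppose η*, η̂* ∈ ℝ^n satisfy the stationarity conditions ∇L(η*) = 0 and ∇L̂(η̂*) = 0 and P η̂* = η̂*. Suppose ‖F(η) − F̂(η)‖ ≤ ε₁ and ‖∇F(η) − ∇F̂(η)‖_F ≤ ε₂ for η = η* and η = η̂*, and ‖(I − P)η*‖ ≤ ε₃. Then ‖∇L̂(η*) − ∇L(η̂*)‖ ≤ c̄₁ ε₁ + c̄₂ ε₂ + ε₃, where c̄₁ = ‖Γ⁻¹‖_op (‖∇F̂(η*)‖_F + ‖∇F(η̂*)‖_F) and c̄₂ = ‖Γ⁻¹‖_op (2‖y‖ + ‖F(η*)‖ + ‖F̂(η̂*)‖). -/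
open Matrix

lemma vnorm_mulVec_fnorm {k l : ℕ} (A : Matrix (Fin k) (Fin l) ℝ) (v : Fin l → ℝ) :
    vnorm (A *ᵥ v) ≤ fnorm A * vnorm v := by
  rw [vnorm, vnorm, fnorm, ← Real.sqrt_mul (by positivity)]
  apply Real.sqrt_le_sqrt
  rw [Finset.sum_mul]
  apply Finset.sum_le_sum
  intro i _
  calc (A *ᵥ v) i ^ 2 = (∑ j, A i j * v j) ^ 2 := by rfl
    _ ≤ (∑ j, A i j ^ 2) * ∑ j, v j ^ 2 :=
        Finset.sum_mul_sq_le_sq_mul_sq _ _ _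

lemma vnorm_mulVec_opnorm {k : ℕ} (A : Matrix (Fin k) (Fin k) ℝ) (v : Fin k → ℝ) :
    vnorm (A *ᵥ v) ≤ opnorm A * vnorm v := by
  rw [vnorm_eq, vnorm_eq, show A *ᵥ v = Matrix.toLin' A v from (Matrix.toLin'_apply A v).symm,
    show (WithLp.equiv 2 (Fin k → ℝ)).symm (Matrix.toLin' A v) =
      Matrix.toEuclideanCLM (𝕜 := ℝ) A ((WithLp.equiv 2 (Fin k → ℝ)).symm v) from rfl]
  exact (Matrix.toEuclideanCLM (𝕜 := ℝ) A).le_opNorm _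

/-- **Gradient difference bound** (key estimate in the proof of Theorem 1 of the paper).
If `∇L(η*) = 0`, `∇L̂(η̂*) = 0`, `P η̂* = η̂*`, the surrogate forward map and Jacobian are
`ε₁`- and `ε₂`-accurate at `η*` and `η̂*`, and `‖(I - P) η*‖ ≤ ε₃`, then
`‖∇L̂(η*) - ∇L(η̂*)‖ ≤ c̄₁ ε₁ + c̄₂ ε₂ + ε₃`. -/
theorem grad_difference_bound
    {n m r : ℕ} (hn : 0 < n) (hm : 0 < m) (hr : 0 < r)
    (y : Fin m → ℝ) (Γ : Matrix (Fin m) (Fin m) ℝ) (hΓ : Γ.PosDef)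
    (F Fh : (Fin n → ℝ) → Fin m → ℝ)
    (J Jh : (Fin n → ℝ) → Matrix (Fin m) (Fin n) ℝ)
    (Φ : Matrix (Fin n) (Fin r) ℝ) (hΦ : Φᵀ * Φ = 1)
    (ηs ηh : Fin n → ℝ)
    (hstat : gradL y Γ F J ηs = 0)
    (hstath : gradLhat y Γ Fh Jh Φ ηh = 0)
    (hproj : (Φ * Φᵀ) *ᵥ ηh = ηh)
    (ε₁ ε₂ ε₃ : ℝ)
    (hF1 : vnorm (F ηs - Fh ηs) ≤ ε₁) (hF2 : vnorm (F ηh - Fh ηh) ≤ ε₁)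
    (hJ1 : fnorm (J ηs - Jh ηs) ≤ ε₂) (hJ2 : fnorm (J ηh - Jh ηh) ≤ ε₂)
    (hP : vnorm ((1 - Φ * Φᵀ) *ᵥ ηs) ≤ ε₃) :
    vnorm (gradLhat y Γ Fh Jh Φ ηs - gradL y Γ F J ηh) ≤
      opnorm Γ⁻¹ * (fnorm (Jh ηs) + fnorm (J ηh)) * ε₁ +
        opnorm Γ⁻¹ * (2 * vnorm y + vnorm (F ηs) + vnorm (Fh ηh)) * ε₂ + ε₃ := by
  have hs : (J ηs)ᵀ *ᵥ (Γ⁻¹ *ᵥ (y - F ηs)) = ηs := by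
    have h := hstat; rw [gradL, neg_add_eq_zero] at h; exact h
  have hh : (Jh ηh)ᵀ *ᵥ (Γ⁻¹ *ᵥ (y - Fh ηh)) = ηh := by
    have h := hstath; rw [gradLhat, neg_add_eq_zero, hproj] at h; exact h
  set T1 : Fin n → ℝ := (J ηs - Jh ηs)ᵀ *ᵥ (Γ⁻¹ *ᵥ (y - F ηs)) with hT1
  set T2 : Fin n → ℝ := (Jh ηs)ᵀ *ᵥ (Γ⁻¹ *ᵥ ((y - F ηs) - (y - Fh ηs))) with hT2
  set T3 : Fin n → ℝ := (J ηh - Jh ηh)ᵀ *ᵥ (Γ⁻¹ *ᵥ (y - Fh ηh)) with hT3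
  set T4 : Fin n → ℝ := (J ηh)ᵀ *ᵥ (Γ⁻¹ *ᵥ ((y - F ηh) - (y - Fh ηh))) with hT4
  set T5 : Fin n → ℝ := (1 - Φ * Φᵀ) *ᵥ ηs with hT5
  have e1 : T1 + T2 = ηs - (Jh ηs)ᵀ *ᵥ (Γ⁻¹ *ᵥ (y - Fh ηs)) := by
    rw [hT1, hT2, Matrix.transpose_sub, Matrix.sub_mulVec,
      Matrix.mulVec_sub Γ⁻¹ (y - F ηs) (y - Fh ηs), Matrix.mulVec_sub (Jh ηs)ᵀ, hs]
    abel
  have e2 : T3 + T4 = (J ηh)ᵀ *ᵥ (Γ⁻¹ *ᵥ (y - F ηh)) - ηh := by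
    rw [hT3, hT4, Matrix.transpose_sub, Matrix.sub_mulVec,
      Matrix.mulVec_sub Γ⁻¹ (y - F ηh) (y - Fh ηh), Matrix.mulVec_sub (J ηh)ᵀ, hh]
    abel
  have e3 : T5 = ηs - (Φ * Φᵀ) *ᵥ ηs := by
    rw [hT5, Matrix.sub_mulVec, Matrix.one_mulVec]
  have key : gradLhat y Γ Fh Jh Φ ηs - gradL y Γ F J ηh = T1 + T2 + T3 + T4 - T5 := by
    rw [gradLhat, gradL, show T1 + T2 + T3 + T4 - T5 = (T1 + T2) + (T3 + T4) - T5 from by abel,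
      e1, e2, e3]
    abel
  have hε₂ : 0 ≤ ε₂ := le_trans (fnorm_nonneg _) hJ1
  have hop : 0 ≤ opnorm Γ⁻¹ := opnorm_nonneg _
  have b1 : vnorm T1 ≤ ε₂ * (opnorm Γ⁻¹ * (vnorm y + vnorm (F ηs))) := by
    refine le_trans (vnorm_mulVec_fnorm _ _) (mul_le_mul ?_ ?_ (vnorm_nonneg _) hε₂)
    · rw [fnorm_transpose]; exact hJ1
    · exact le_trans (vnorm_mulVec_opnorm _ _)
        (mul_le_mul_of_nonneg_left (vnorm_sub_le _ _) hop)
  have b2 : vnorm T2 ≤ fnorm (Jh ηs) * (opnorm Γ⁻¹ * ε₁) := by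
    refine le_trans (vnorm_mulVec_fnorm _ _) (mul_le_mul ?_ ?_ (vnorm_nonneg _) (fnorm_nonneg _))
    · rw [fnorm_transpose]
    · refine le_trans (vnorm_mulVec_opnorm _ _) (mul_le_mul_of_nonneg_left ?_ hop)
      have : (y - F ηs) - (y - Fh ηs) = -(F ηs - Fh ηs) := by abel
      rw [this, vnorm_neg]; exact hF1
  have b3 : vnorm T3 ≤ ε₂ * (opnorm Γ⁻¹ * (vnorm y + vnorm (Fh ηh))) := by
    refine le_trans (vnorm_mulVec_fnorm _ _) (mul_le_mul ?_ ?_ (vnorm_nonneg _) hε₂)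
    · rw [fnorm_transpose]; exact hJ2
    · exact le_trans (vnorm_mulVec_opnorm _ _)
        (mul_le_mul_of_nonneg_left (vnorm_sub_le _ _) hop)
  have b4 : vnorm T4 ≤ fnorm (J ηh) * (opnorm Γ⁻¹ * ε₁) := by
    refine le_trans (vnorm_mulVec_fnorm _ _) (mul_le_mul ?_ ?_ (vnorm_nonneg _) (fnorm_nonneg _))
    · rw [fnorm_transpose]
    · refine le_trans (vnorm_mulVec_opnorm _ _) (mul_le_mul_of_nonneg_left ?_ hop)
      have : (y - F ηh) - (y - Fh ηh) = -(F ηh - Fh ηh) := by abel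
      rw [this, vnorm_neg]; exact hF2
  have tri : vnorm (T1 + T2 + T3 + T4 - T5) ≤
      vnorm T1 + vnorm T2 + vnorm T3 + vnorm T4 + vnorm T5 := by
    calc vnorm (T1 + T2 + T3 + T4 - T5)
        ≤ vnorm (T1 + T2 + T3 + T4) + vnorm T5 := vnorm_sub_le _ _
      _ ≤ (vnorm (T1 + T2 + T3) + vnorm T4) + vnorm T5 := by
          have := vnorm_add_le (T1 + T2 + T3) T4; linarith
      _ ≤ ((vnorm (T1 + T2) + vnorm T3) + vnorm T4) + vnorm T5 := by
          have := vnorm_add_le (T1 + T2) T3; linarith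
      _ ≤ vnorm T1 + vnorm T2 + vnorm T3 + vnorm T4 + vnorm T5 := by
          have := vnorm_add_le T1 T2; linarith
  rw [key]
  have rearrange : opnorm Γ⁻¹ * (fnorm (Jh ηs) + fnorm (J ηh)) * ε₁ +
      opnorm Γ⁻¹ * (2 * vnorm y + vnorm (F ηs) + vnorm (Fh ηh)) * ε₂ + ε₃ =
      (ε₂ * (opnorm Γ⁻¹ * (vnorm y + vnorm (F ηs))) + fnorm (Jh ηs) * (opnorm Γ⁻¹ * ε₁)
        + ε₂ * (opnorm Γ⁻¹ * (vnorm y + vnorm (Fh ηh))) + fnorm (J ηh) * (opnorm Γ⁻¹ * ε₁)) + ε₃ := by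
    ring
  rw [rearrange]
  linarith [tri, b1, b2, b3, b4, hP]
end
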